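/- The cyclic group ℤ₃ has no 2-partite oriented semiregular representation: there is no oriented graph Γ whose automorphism group is isomorphic to ℤ₃ and acts semiregularly on V(Γ) with exactly two orbits forming a bipartition of Γ. -/

import Mathlib

/-!
Fix `b ∈ B` and `c ∉ B`. Since `ℤ₃` acts regularly on each side, `g ↦ g • b` and `g ↦ g • c`
identify `Γ` with the bipartite 2-Cayley digraph on `ℤ₃ ⊕ ℤ₃` with connection sets
`T₁ = {k | b → k • c}` and `T₂ = {k | c → k • b}`, and under this identification every
automorphism of `Γ` is a translation. Orientation says `T₁ ∩ T₂⁻¹ = ∅`, and for two such subsets of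
`ℤ₃` either both are symmetric under the reflections `k ↦ d k⁻¹` and `k ↦ d⁻¹ k⁻¹` for a common `d`,
or both are singletons `{s}`, `{t}`. In the first case `g ↦ g⁻¹` on one side and `g ↦ d g⁻¹` on the
other is an automorphism; in the second `g ↦ g s` followed by exchanging the sides is one. Neither
is a translation.
-/

def autSubgroup {V : Type*} (Arc : V → V → Prop) : Subgroup (Equiv.Perm V) where
  carrier := {σ | ∀ u v, Arc u v ↔ Arc (σ u) (σ v)}
  one_mem' := fun _ _ => Iff.rfl
  mul_mem' := by
    intro σ τ hσ hτ u v
    simpa using (hτ u v).trans (hσ (τ u) (τ v))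
  inv_mem' := by
    intro σ hσ u v
    simpa using (hσ (σ⁻¹ u) (σ⁻¹ v)).symm

open Equiv

lemma permCongr_mem_autSubgroup {V W : Type*} {Arc : V → V → Prop} {Arc' : W → W → Prop}
    (Φ : W ≃ V) (hΦ : ∀ x y, Arc (Φ x) (Φ y) ↔ Arc' x y) {π : Perm W}
    (hπ : π ∈ autSubgroup Arc') : Φ.permCongr π ∈ autSubgroup Arc := by
  intro u v
  obtain ⟨x, rfl⟩ := Φ.surjective u
  obtain ⟨y, rfl⟩ := Φ.surjective v
  simpa [permCongr_apply, hΦ] using hπ x y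

namespace TwoCayley

section Group

variable {G : Type*} [Group G]

/-- The 2-Cayley digraph `Cay(G, (T_{i,j}))` with `T₁ = T_{1,2}`, `T₂ = T_{2,1}` and
`T_{1,1} = T_{2,2} = ∅`. -/
def Arc (T₁ T₂ : Set G) : G ⊕ G → G ⊕ G → Prop
  | .inl g, .inr h => g⁻¹ * h ∈ T₁
  | .inr g, .inl h => g⁻¹ * h ∈ T₂
  | _, _ => False

def translate (g : G) : Perm (G ⊕ G) := (Equiv.mulLeft g).sumCongr (Equiv.mulLeft g)

lemma inv_notMem_of_asymm {T₁ T₂ : Set G} (h : ∀ x y, Arc T₁ T₂ x y → ¬ Arc T₁ T₂ y x) :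
    ∀ k ∈ T₁, k⁻¹ ∉ T₂ := fun k hk hk' =>
  h (.inl 1) (.inr k) (by simpa [Arc] using hk) (by simpa [Arc] using hk')

end Group

section CommGroup

variable {G : Type*} [CommGroup G]

def reflect (d : G) : Perm (G ⊕ G) := (Equiv.inv G).sumCongr ((Equiv.inv G).trans (Equiv.mulLeft d))

def sideSwap (s t : G) : Perm (G ⊕ G) :=
  ((Equiv.mulRight s).sumCongr (Equiv.mulRight t)).trans (sumComm G G)

lemma reflect_mem_autSubgroup {T₁ T₂ : Set G} {d : G} (h₁ : ∀ k, k ∈ T₁ ↔ d * k⁻¹ ∈ T₁)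
    (h₂ : ∀ k, k ∈ T₂ ↔ d⁻¹ * k⁻¹ ∈ T₂) : reflect d ∈ autSubgroup (Arc T₁ T₂) := by
  rintro (g | g) (h | h) <;> simp only [reflect, Arc, sumCongr_apply, Sum.map_inl, Sum.map_inr,
    trans_apply, inv_apply, coe_mulLeft, inv_inv]
  · rw [h₁]; congr! 1; simp only [mul_inv_rev, inv_inv, mul_comm, mul_left_comm]
  · rw [h₂]; congr! 1; simp only [mul_inv_rev, inv_inv, mul_comm, mul_left_comm, mul_assoc]

lemma sideSwap_mem_autSubgroup (s t : G) : sideSwap s t ∈ autSubgroup (Arc {s} {t}) := by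
  rintro (g | g) (h | h) <;> simp only [sideSwap, Arc, trans_apply, sumCongr_apply, Sum.map_inl,
    Sum.map_inr, sumComm_apply, Sum.swap_inl, Sum.swap_inr, coe_mulRight, Set.mem_singleton_iff,
    mul_inv_rev, iff_self]
  · rw [show s⁻¹ * g⁻¹ * (h * t) = s⁻¹ * (g⁻¹ * h) * t by ac_rfl, mul_eq_right, inv_mul_eq_one,
      eq_comm]
  · rw [show t⁻¹ * g⁻¹ * (h * s) = t⁻¹ * (g⁻¹ * h) * s by ac_rfl, mul_eq_right, inv_mul_eq_one,
      eq_comm]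

lemma reflect_ne_translate {a : G} (ha : a⁻¹ ≠ a) (d g : G) : reflect d ≠ translate g := by
  intro h
  have hg : g = 1 := by simpa [reflect, translate] using (congrArg (· (.inl 1)) h).symm
  exact ha (by simpa [reflect, translate, hg] using congrArg (· (.inl a)) h)

lemma sideSwap_ne_translate (s t g : G) : sideSwap s t ≠ translate g := by
  intro h
  simpa [sideSwap, translate] using congrArg (· (.inl 1)) h

end CommGroup

set_option synthInstance.maxSize 512 in
lemma zmod3_finset_reflective_or_singletons (T₁ T₂ : Finset (Multiplicative (ZMod 3)))
    (h : ∀ k ∈ T₁, k⁻¹ ∉ T₂) :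
    (∃ d, (∀ k, k ∈ T₁ ↔ d * k⁻¹ ∈ T₁) ∧ (∀ k, k ∈ T₂ ↔ d⁻¹ * k⁻¹ ∈ T₂)) ∨
      ∃ s t, T₁ = {s} ∧ T₂ = {t} := by
  revert h T₂ T₁
  decide

lemma zmod3_reflective_or_singletons (T₁ T₂ : Set (Multiplicative (ZMod 3)))
    (h : ∀ k ∈ T₁, k⁻¹ ∉ T₂) :
    (∃ d, (∀ k, k ∈ T₁ ↔ d * k⁻¹ ∈ T₁) ∧ (∀ k, k ∈ T₂ ↔ d⁻¹ * k⁻¹ ∈ T₂)) ∨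
      ∃ s t, T₁ = {s} ∧ T₂ = {t} := by
  classical
  simpa [← Set.toFinset_singleton, Set.toFinset_inj] using
    zmod3_finset_reflective_or_singletons T₁.toFinset T₂.toFinset (by simpa using h)

theorem zmod3_exists_mem_autSubgroup_ne_translate (T₁ T₂ : Set (Multiplicative (ZMod 3)))
    (h : ∀ k ∈ T₁, k⁻¹ ∉ T₂) : ∃ π ∈ autSubgroup (Arc T₁ T₂), ∀ g, π ≠ translate g := by
  rcases zmod3_reflective_or_singletons T₁ T₂ h with ⟨d, h₁, h₂⟩ | ⟨s, t, rfl, rfl⟩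
  · exact ⟨reflect d, reflect_mem_autSubgroup h₁ h₂,
      reflect_ne_translate (a := .ofAdd 1) (by decide) d⟩
  · exact ⟨sideSwap s t, sideSwap_mem_autSubgroup s t, sideSwap_ne_translate s t⟩

end TwoCayley

section OrbitCoords

variable {G V : Type*} [Group G] [MulAction G V]

def orbitCoords (b c : V) : G ⊕ G → V := Sum.elim (· • b) (· • c)

lemma orbitCoords_translate (b c : V) (g : G) (x : G ⊕ G) :
    orbitCoords b c (TwoCayley.translate g x) = g • orbitCoords b c x := by
  rcases x with h | h <;> simp [orbitCoords, TwoCayley.translate, mul_smul]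

variable {B : Set V} {b c : V}

lemma smul_mem_iff_of_invariant (hB : ∀ g : G, ∀ v ∈ B, g • v ∈ B) (g : G) (v : V) :
    g • v ∈ B ↔ v ∈ B :=
  ⟨fun h => by simpa using hB g⁻¹ _ h, hB g v⟩

lemma orbitCoords_bijective (hfree : ∀ (g : G) (v : V), g • v = v → g = 1)
    (hB : ∀ g : G, ∀ v ∈ B, g • v ∈ B) (hb : b ∈ B) (hc : c ∉ B)
    (htransB : ∀ v ∈ B, ∃ g : G, g • b = v) (htransC : ∀ v ∉ B, ∃ g : G, g • c = v) :
    Function.Bijective (orbitCoords (G := G) b c) := by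
  have hcancel (g h : G) (v : V) (e : g • v = h • v) : g = h :=
    inv_mul_eq_one.mp (hfree _ v (by rw [mul_smul, ← e, inv_smul_smul]))
  constructor
  · rintro (g | g) (h | h) e <;> simp only [orbitCoords, Sum.elim_inl, Sum.elim_inr] at e
    · rw [hcancel g h b e]
    · exact absurd ((smul_mem_iff_of_invariant hB h c).mp (e ▸ hB g b hb)) hc
    · exact absurd ((smul_mem_iff_of_invariant hB g c).mp (e ▸ hB h b hb)) hc
    · rw [hcancel g h c e]
  · intro v
    by_cases hv : v ∈ B
    · obtain ⟨g, rfl⟩ := htransB v hv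
      exact ⟨.inl g, rfl⟩
    · obtain ⟨g, rfl⟩ := htransC v hv
      exact ⟨.inr g, rfl⟩

lemma arc_orbitCoords_iff {Arc : V → V → Prop}
    (hact : ∀ (g : G) u v, Arc u v ↔ Arc (g • u) (g • v))
    (hbip : ∀ u v, Arc u v → (u ∈ B ∧ v ∈ Bᶜ) ∨ (u ∈ Bᶜ ∧ v ∈ B))
    (hB : ∀ g : G, ∀ v ∈ B, g • v ∈ B) (hb : b ∈ B) (hc : c ∉ B) (x y : G ⊕ G) :
    Arc (orbitCoords b c x) (orbitCoords b c y) ↔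
      TwoCayley.Arc {k | Arc b (k • c)} {k | Arc c (k • b)} x y := by
  have hmem := smul_mem_iff_of_invariant hB
  rcases x with g | g <;> rcases y with h | h <;>
    simp only [orbitCoords, TwoCayley.Arc, Sum.elim_inl, Sum.elim_inr, Set.mem_ofPred_eq,
      iff_false]
  · intro e
    rcases hbip _ _ e with ⟨-, h'⟩ | ⟨h', -⟩
    exacts [h' ((hmem h b).mpr hb), h' ((hmem g b).mpr hb)]
  · rw [hact g⁻¹, inv_smul_smul, smul_smul]
  · rw [hact g⁻¹, inv_smul_smul, smul_smul]
  · intro e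
    rcases hbip _ _ e with ⟨h', -⟩ | ⟨-, h'⟩
    exacts [hc ((hmem g c).mp h'), hc ((hmem h c).mp h')]

lemma eq_translate_of_mem_autSubgroup {Arc : V → V → Prop} {T₁ T₂ : Set G} (Φ : G ⊕ G ≃ V)
    (hΦ : ∀ g x, Φ (TwoCayley.translate g x) = g • Φ x)
    (harc : ∀ x y, Arc (Φ x) (Φ y) ↔ TwoCayley.Arc T₁ T₂ x y)
    (hall : ∀ σ ∈ autSubgroup Arc, ∃ g : G, ∀ v, σ v = g • v)
    {π : Perm (G ⊕ G)} (hπ : π ∈ autSubgroup (TwoCayley.Arc T₁ T₂)) :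
    ∃ g, π = TwoCayley.translate g := by
  obtain ⟨g, hg⟩ := hall _ (permCongr_mem_autSubgroup Φ harc hπ)
  refine ⟨g, Equiv.ext fun x => Φ.injective ?_⟩
  rw [hΦ, ← hg]
  simp [permCongr_apply]

end OrbitCoords

theorem stmt_12 :
    ¬ ∃ (V : Type) (_ : Fintype V) (Arc : V → V → Prop) (B : Set V),
      (∀ v, ¬ Arc v v) ∧
      (∀ u v, Arc u v → ¬ Arc v u) ∧
      Nonempty (autSubgroup Arc ≃* Multiplicative (ZMod 3)) ∧
      (∀ σ ∈ autSubgroup Arc, (∃ v, σ v = v) → σ = 1) ∧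
      (∀ σ ∈ autSubgroup Arc, ∀ v ∈ B, σ v ∈ B) ∧
      (∀ u ∈ B, ∀ v ∈ B, ∃ σ ∈ autSubgroup Arc, σ u = v) ∧
      (∀ u ∈ Bᶜ, ∀ v ∈ Bᶜ, ∃ σ ∈ autSubgroup Arc, σ u = v) ∧
      B.Nonempty ∧ Bᶜ.Nonempty ∧
      (∀ u v, Arc u v → ((u ∈ B ∧ v ∈ Bᶜ) ∨ (u ∈ Bᶜ ∧ v ∈ B))) := by
  rintro ⟨V, _, Arc, B, -, hasymm, ⟨iso⟩, hfree, hB, htransB, htransC, ⟨b, hb⟩, ⟨c, hc⟩, hbip⟩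
  let _ : MulAction (Multiplicative (ZMod 3)) V :=
    MulAction.compHom V ((autSubgroup Arc).subtype.comp iso.symm.toMonoidHom)
  have hsmul (g : Multiplicative (ZMod 3)) (v : V) : g • v = (iso.symm g : Perm V) v := rfl
  have hall (σ) (hσ : σ ∈ autSubgroup Arc) : ∃ g : Multiplicative (ZMod 3), ∀ v, σ v = g • v :=
    ⟨iso ⟨σ, hσ⟩, fun v => by simp [hsmul]⟩
  have hlift (u v : V) (h : ∃ σ ∈ autSubgroup Arc, σ u = v) :
      ∃ g : Multiplicative (ZMod 3), g • u = v :=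
    let ⟨σ, hσ, hσu⟩ := h
    (hall σ hσ).imp fun g hg => (hg u).symm.trans hσu
  have hact (g : Multiplicative (ZMod 3)) : ∀ u v, Arc u v ↔ Arc (g • u) (g • v) := (iso.symm g).2
  have hB' (g : Multiplicative (ZMod 3)) : ∀ v ∈ B, g • v ∈ B := hB _ (iso.symm g).2
  have hfree' (g : Multiplicative (ZMod 3)) (v : V) (h : g • v = v) : g = 1 := by
    simpa using congrArg iso (Subtype.ext (hfree _ (iso.symm g).2 ⟨v, h⟩) : iso.symm g = 1)
  let Φ := Equiv.ofBijective _ (orbitCoords_bijective hfree' hB' hb hc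
    (fun v hv => hlift _ _ (htransB b hb v hv)) (fun v hv => hlift _ _ (htransC c hc v hv)))
  have harc := arc_orbitCoords_iff hact hbip hB' hb hc
  obtain ⟨π, hπ, hne⟩ := TwoCayley.zmod3_exists_mem_autSubgroup_ne_translate _ _
    (TwoCayley.inv_notMem_of_asymm fun x y hxy hyx =>
      hasymm _ _ ((harc x y).2 hxy) ((harc y x).2 hyx))
  obtain ⟨g, rfl⟩ := eq_translate_of_mem_autSubgroup Φ (orbitCoords_translate b c) harc hall hπ
  exact hne g rfl
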